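/- arXiv:1712.09602 — 4 statements merged into one kernel-verified Lean document; each statement's English description precedes it below -/
import Mathlib

section
/- Let A be an integer array of size (mp+1)×(np+1), with corner entries a = A[0,0], b = A[0,np], c = A[mp,0], d = A[mp,np]. If A possesses the p×p property (every contiguous p×p subsquare of A has the same sum), then a + d = b + c. -/
/-!
Sliding a window of length `p` by one step changes its sum by `f (j + p) - f j`, so a sequence
whose window sums are all equal is `p`-periodic on its domain. Applied to the column sums of a
horizontal strip of `p` rows, this makes the strip sums of columns `0` and `n p` equal; hence the
row differences `A i (n p) - A i 0` have vanishing window sums, are `p`-periodic, and agree at rows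
`0` and `m p`.
-/

open Finset

section WindowSum

variable {G : Type*} [AddCommGroup G] (f : ℕ → G) {p N : ℕ} {S : G}

theorem sum_range_add_succ_add (j p : ℕ) :
    ∑ b ∈ range p, f (j + 1 + b) + f j = ∑ b ∈ range p, f (j + b) + f (j + p) := by
  rw [← sum_range_succ (fun b => f (j + b)), sum_range_succ', add_zero]
  simp only [add_right_comm j, add_assoc]

variable {f}

theorem apply_add_eq_of_sum_range_eq (h : ∀ j, j + p ≤ N → ∑ b ∈ range p, f (j + b) = S)
    {j : ℕ} (hj : j + p < N) : f (j + p) = f j := by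
  have := sum_range_add_succ_add f j p
  rw [h (j + 1) (by omega), h j (by omega)] at this
  exact (add_left_cancel this).symm

theorem apply_mul_eq_apply_zero_of_sum_range_eq
    (h : ∀ j, j + p ≤ N → ∑ b ∈ range p, f (j + b) = S) {k : ℕ} (hk : k * p < N) :
    f (k * p) = f 0 := by
  induction k with
  | zero => rw [zero_mul]
  | succ k ih =>
    have hk' : k * p + p < N := by rwa [← Nat.succ_mul]
    rw [Nat.succ_mul, apply_add_eq_of_sum_range_eq h hk', ih (by omega)]

end WindowSum

theorem stmt_4_general (m n p : ℕ)
    (A : ℕ → ℕ → ℤ) (S : ℤ)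
    (h : ∀ i j : ℕ, i + p ≤ m * p + 1 → j + p ≤ n * p + 1 →
      ∑ a : Fin p, ∑ b : Fin p, A (i + a) (j + b) = S) :
    A 0 0 + A (m * p) (n * p) = A 0 (n * p) + A (m * p) 0 := by
  replace h : ∀ i j, i + p ≤ m * p + 1 → j + p ≤ n * p + 1 →
      ∑ a ∈ range p, ∑ b ∈ range p, A (i + a) (j + b) = S := fun i j hi hj => by
    rw [← h i j hi hj, ← Fin.sum_univ_eq_sum_range]
    simp only [← Fin.sum_univ_eq_sum_range (fun b => A _ (j + b))]
  have strip : ∀ i, i + p ≤ m * p + 1 →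
      ∑ a ∈ range p, A (i + a) (n * p) = ∑ a ∈ range p, A (i + a) 0 := fun i hi =>
    apply_mul_eq_apply_zero_of_sum_range_eq (f := fun j => ∑ a ∈ range p, A (i + a) j)
      (fun j hj => by rw [sum_comm]; exact h i j hi hj) (Nat.lt_succ_self _)
  have rowDiff := apply_mul_eq_apply_zero_of_sum_range_eq
    (f := fun i => A i (n * p) - A i 0) (S := 0)
    (fun i hi => by rw [sum_sub_distrib, strip i hi, sub_self]) (Nat.lt_succ_self (m * p))
  linarith

/-- Lemma: if an (mp+1)×(np+1) integer array has the (contiguous) p×p property,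
then opposite corners sum equally: a + d = b + c. -/
theorem stmt_4 (m n p : ℕ) (hm : 0 < m) (hn : 0 < n) (hp : 2 ≤ p)
    (A : ℕ → ℕ → ℤ) (S : ℤ)
    (h : ∀ i j : ℕ, i + p ≤ m * p + 1 → j + p ≤ n * p + 1 →
      ∑ a : Fin p, ∑ b : Fin p, A (i + a) (j + b) = S) :
    A 0 0 + A (m * p) (n * p) = A 0 (n * p) + A (m * p) 0 :=
  stmt_4_general m n p A S h
end

section
/- Let A be an integer array of size (mp+1)×(np) with the p×p property. Let a = A[0,0], c = A[mp,0], and let b_1,...,b_{p-1} be the last p−1 entries of the top row (A[0, (n-1)p+1], ..., A[0, np-1]) and d_1,...,d_{p-1} the last p−1 entries of the bottom row. Then a + ∑_{i=1}^{p-1} b_i = c + ∑_{i=1}^{p-1} d_i. -/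
/-!
Write `W r j` for the sum of the `p` entries `A r j, …, A r (j + p - 1)`. Two vertically adjacent
`p × p` squares have the same sum, and their difference is `W i j - W (i + p) j`; hence `W r j`
is `p`-periodic in `r`, and `W 0 j = W (m p) j`. In each row, both sides of the identity are
combinations of window sums at columns `k p`, `k p + 1` and `(n - 1) p`: sliding a window one
step changes it by `A r j - A r (j + p)`, so these differences telescope to `A r 0 - A r ((n - 1) p)`.
-/

open Finset

theorem apply_mul_eq_apply_zero_of_periodic {α : Type*} {f : ℕ → α} {p L : ℕ}
    (hf : ∀ i, i + p ≤ L → f (i + p) = f i) {k : ℕ} (hk : k * p ≤ L) : f (k * p) = f 0 := by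
  induction k with
  | zero => simp
  | succ k ih =>
    rw [add_one_mul] at hk ⊢
    rw [hf _ hk, ih (by omega)]

section WindowSum

variable {G : Type*} [AddCommGroup G]

def windowSum (p : ℕ) (f : ℕ → G) (j : ℕ) : G :=
  ∑ b ∈ range p, f (j + b)

theorem windowSum_sub_windowSum_succ (p : ℕ) (f : ℕ → G) (j : ℕ) :
    windowSum p f j - windowSum p f (j + 1) = f j - f (j + p) := by
  induction p with
  | zero => simp [windowSum]
  | succ p ih =>
    simp only [windowSum, sum_range_succ] at ih ⊢
    rw [add_sub_add_comm, ih, show j + 1 + p = j + (p + 1) by omega]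
    abel

theorem sum_range_windowSum_sub_windowSum_succ (p N : ℕ) (f : ℕ → G) :
    ∑ k ∈ range N, (windowSum p f (k * p) - windowSum p f (k * p + 1)) = f 0 - f (N * p) := by
  simp_rw [windowSum_sub_windowSum_succ, ← add_one_mul]
  simpa using sum_range_sub' (fun k => f (k * p)) N

theorem add_sum_Icc_eq_windowSum {p : ℕ} (hp : 0 < p) (N : ℕ) (f : ℕ → G) :
    f 0 + ∑ i ∈ Icc 1 (p - 1), f (N * p + i) =
      ∑ k ∈ range N, (windowSum p f (k * p) - windowSum p f (k * p + 1)) +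
        windowSum p f (N * p) := by
  have hrange : range p = insert 0 (Icc 1 (p - 1)) := by
    ext x
    simp only [mem_range, mem_insert, mem_Icc]
    omega
  rw [sum_range_windowSum_sub_windowSum_succ, windowSum, hrange, sum_insert (by simp)]
  simp only [add_zero]
  abel

theorem sum_square_eq_windowSum_windowSum (p : ℕ) (A : ℕ → ℕ → G) (i j : ℕ) :
    ∑ a : Fin p, ∑ b : Fin p, A (i + a) (j + b) =
      windowSum p (fun r => windowSum p (A r) j) i := by
  simp only [windowSum, ← Fin.sum_univ_eq_sum_range (fun a => ∑ b : Fin p, A (i + a) (j + b)),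
    ← Fin.sum_univ_eq_sum_range (fun b => A (i + _) (j + b))]

theorem windowSum_bottom_eq_windowSum_top {m n p : ℕ} {A : ℕ → ℕ → G} {S : G}
    (h : ∀ i j : ℕ, i + p ≤ m * p + 1 → j + p ≤ n * p →
      ∑ a : Fin p, ∑ b : Fin p, A (i + a) (j + b) = S)
    {j : ℕ} (hj : j + p ≤ n * p) : windowSum p (A (m * p)) j = windowSum p (A 0) j := by
  refine apply_mul_eq_apply_zero_of_periodic (f := fun r => windowSum p (A r) j) (fun i hi => ?_)
    le_rfl
  have hdiff := windowSum_sub_windowSum_succ p (fun r => windowSum p (A r) j) i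
  rw [← sum_square_eq_windowSum_windowSum, ← sum_square_eq_windowSum_windowSum,
    h i j (by omega) hj, h (i + 1) j (by omega) hj, sub_self] at hdiff
  exact (sub_eq_zero.mp hdiff.symm).symm

end WindowSum

theorem stmt_5_general (m n p : ℕ) (hn : 0 < n) (hp : 2 ≤ p)
    (A : ℕ → ℕ → ℤ) (S : ℤ)
    (h : ∀ i j : ℕ, i + p ≤ m * p + 1 → j + p ≤ n * p →
      ∑ a : Fin p, ∑ b : Fin p, A (i + a) (j + b) = S) :
    A 0 0 + ∑ i ∈ Finset.Icc 1 (p - 1), A 0 ((n - 1) * p + i) =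
      A (m * p) 0 + ∑ i ∈ Finset.Icc 1 (p - 1), A (m * p) ((n - 1) * p + i) := by
  have hcol := fun j => windowSum_bottom_eq_windowSum_top (j := j) h
  have hlast : (n - 1) * p + p = n * p := by
    rw [← add_one_mul, Nat.sub_add_cancel (Nat.one_le_of_lt hn)]
  rw [add_sum_Icc_eq_windowSum (by omega), add_sum_Icc_eq_windowSum (by omega),
    hcol _ hlast.le]
  refine congrArg (· + _) (sum_congr rfl fun k hk => ?_)
  have hk : k * p + p + p ≤ n * p := by
    simpa only [add_mul, one_mul, two_mul, add_assoc] using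
      Nat.mul_le_mul_right p (show k + 2 ≤ n by rw [mem_range] at hk; omega)
  rw [hcol _ (by omega), hcol _ (by omega)]

/-- Lemma: if an (mp+1)×(np) integer array has the (contiguous) p×p property, then
a + b_1 + ⋯ + b_{p-1} = c + d_1 + ⋯ + d_{p-1}, where a, c are the first entries of
the top and bottom rows and b_i, d_i are the last p−1 entries of those rows. -/
theorem stmt_5 (m n p : ℕ) (hm : 0 < m) (hn : 0 < n) (hp : 2 ≤ p)
    (A : ℕ → ℕ → ℤ) (S : ℤ)
    (h : ∀ i j : ℕ, i + p ≤ m * p + 1 → j + p ≤ n * p →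
      ∑ a : Fin p, ∑ b : Fin p, A (i + a) (j + b) = S) :
    A 0 0 + ∑ i ∈ Finset.Icc 1 (p - 1), A 0 ((n - 1) * p + i) =
      A (m * p) 0 + ∑ i ∈ Finset.Icc 1 (p - 1), A (m * p) ((n - 1) * p + i) :=
  stmt_5_general m n p hn hp A S h
end

section
/- Let n be divisible by p and let R be an n×n integer array with the toric p×p property. Then the sum of the entries in any p consecutive entries of a row, ∑_{t=0}^{p-1} r_{i,j+t}, is invariant under shifting the row index by p: ∑_{t=0}^{p-1} r_{i,j+t} = ∑_{t=0}^{p-1} r_{i+p,j+t} (indices mod n). -/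
/-! Summing the p×p property over the windows of rows i, …, i+p-1 and i+1, …, i+p, which
overlap in p-1 rows, shows that the p-entry row segments in rows i and i+p have equal sum. -/

open Finset

theorem apply_zero_eq_of_sum_range_shift_eq {M : Type*} [AddCancelCommMonoid M] (g : ℕ → M)
    (p : ℕ) (h : ∑ a ∈ range p, g (a + 1) = ∑ a ∈ range p, g a) : g 0 = g p := by
  refine add_left_cancel (a := ∑ a ∈ range p, g a) ?_
  calc ∑ a ∈ range p, g a + g 0 = ∑ a ∈ range p, g (a + 1) + g 0 := by rw [h]
    _ = ∑ a ∈ range (p + 1), g a := (sum_range_succ' g p).symm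
    _ = ∑ a ∈ range p, g a + g p := sum_range_succ g p

theorem sum_range_block_eq {n : ℕ} {p : ℕ} (R : ZMod n → ZMod n → ℤ) {S : ℤ}
    (hS : ∀ i j : ZMod n, ∑ a : Fin p, ∑ b : Fin p, R (i + (a : ℕ)) (j + (b : ℕ)) = S)
    (i j : ZMod n) (k : ℕ) :
    ∑ a ∈ range p, ∑ t : Fin p, R (i + ((a + k : ℕ) : ZMod n)) (j + (t : ℕ)) = S := by
  rw [← hS (i + k) j, ← Fin.sum_univ_eq_sum_range
    (fun a => ∑ t : Fin p, R (i + ((a + k : ℕ) : ZMod n)) (j + (t : ℕ)))]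
  refine sum_congr rfl fun a _ => sum_congr rfl fun t _ => ?_
  rw [Nat.cast_add, add_right_comm, add_assoc]

theorem stmt_10_general (p n : ℕ)
    (R : ZMod n → ZMod n → ℤ)
    (h : ∃ S : ℤ, ∀ i j : ZMod n,
      ∑ a : Fin p, ∑ b : Fin p, R (i + (a : ℕ)) (j + (b : ℕ)) = S) :
    ∀ i j : ZMod n,
      ∑ t : Fin p, R i (j + (t : ℕ)) = ∑ t : Fin p, R (i + (p : ℕ)) (j + (t : ℕ)) := by
  obtain ⟨S, hS⟩ := h
  intro i j
  have hshift := apply_zero_eq_of_sum_range_shift_eq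
    (fun k : ℕ => ∑ t : Fin p, R (i + (k : ℕ)) (j + (t : ℕ))) p
    ((sum_range_block_eq R hS i j 1).trans (sum_range_block_eq R hS i j 0).symm)
  simpa using hshift

/-- If an n×n toric integer array has the p×p property (p ∣ n), then the sum of any
p consecutive entries of a row is invariant under shifting the row index by p. -/
theorem stmt_10 (p n : ℕ) (hp : 2 ≤ p) (hn : 0 < n) (hpn : p ∣ n)
    (R : ZMod n → ZMod n → ℤ)
    (h : ∃ S : ℤ, ∀ i j : ZMod n,
      ∑ a : Fin p, ∑ b : Fin p, R (i + (a : ℕ)) (j + (b : ℕ)) = S) :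
    ∀ i j : ZMod n,
      ∑ t : Fin p, R i (j + (t : ℕ)) = ∑ t : Fin p, R (i + (p : ℕ)) (j + (t : ℕ)) :=
  stmt_10_general p n R h
end

section
/- For p prime and n divisible by p³, if R is an n×n natural pandiagonal square with the complementary property and toric p×p property (with subsquare sum p²(n²−1)/2), then every column of θ(R) splits into p consecutive segments of n/p entries each summing to n(n²−1)/(2p) (the 1/p column property). -/
/-- The index swap i = ℓp + m ↦ ī = mp + ℓ on {0,…,p²−1}. -/
def barIdx (p i : ℕ) : ℕ := (i % p) * p + i / p

/-- The block involution θ on n×n toric arrays: viewing R as a p²×p² array of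
blocks of size n/p², [θ(R)]_{i,j} = R_{ī,j̄}. -/
def thetaZ (p n : ℕ) [NeZero n] (R : ZMod n → ZMod n → ℤ) : ZMod n → ZMod n → ℤ :=
  fun i j =>
    let q := n / p ^ 2
    R ((barIdx p (i.val / q) * q + i.val % q : ℕ) : ZMod n)
      ((barIdx p (j.val / q) * q + j.val % q : ℕ) : ZMod n)

/-!
Write `n = p²q` (so `p ∣ q`) and `m = n/p = pq`. On the rows `s·m, …, s·m + m − 1` the map `θ`
reads the single column `c̄` of `R`, at the rows `j·m + (s mod p)·q + u` for `j < p`, `u < q`.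
Constant `p × p` subsquare sums make the sum of `p` consecutive entries of a column `p`-periodic
in the column index, hence also the sum of `q` consecutive entries. Moving the column of the
`j`-th block from `c̄` to `c̄ + j·m` therefore changes nothing, and the segment becomes `q` disjoint
complementary diagonals, each summing to `K = ⌊p(n²−1)/2⌋`. Since `m` complementary diagonals
tile a broken diagonal, `pqK = n(n²−1)/2`, which turns `qK` into `n(n²−1)/(2p)` despite the floor.
-/

open Finset Function

theorem sum_range_mul {M : Type*} [AddCommMonoid M] (f : ℕ → M) (m k : ℕ) :
    ∑ v ∈ range (k * m), f v = ∑ t ∈ range k, ∑ u ∈ range m, f (t * m + u) := by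
  induction k with
  | zero => simp
  | succ k ih => rw [Nat.succ_mul, sum_range_add, ih, sum_range_succ]

section WindowSums

variable {G M : Type*} [CommSemiring G]

theorem periodic_of_sum_range_add_eq [AddCancelCommMonoid M] {g : G → M} {p : ℕ} {C : M}
    (h : ∀ x, ∑ b ∈ range p, g (x + b) = C) : Periodic g p := by
  intro x
  have hsucc := sum_range_succ (fun b => g (x + b)) p
  rw [sum_range_succ', h x] at hsucc
  have hshift : ∑ b ∈ range p, g (x + ↑(b + 1)) = C := by
    rw [← h (x + 1)]
    refine sum_congr rfl fun b _ => ?_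
    push_cast
    ring_nf
  rw [hshift, Nat.cast_zero, add_zero] at hsucc
  exact (add_left_cancel hsucc).symm

theorem periodic_sum_rows_of_sum_square_eq [AddCancelCommMonoid M] {R : G → G → M} {p : ℕ}
    {C : M} (h : ∀ i j, ∑ a ∈ range p, ∑ b ∈ range p, R (i + a) (j + b) = C) (k : ℕ) (i : G) :
    Periodic (fun x => ∑ u ∈ range (k * p), R (i + u) x) p := by
  have hwindow : ∀ i, Periodic (fun x => ∑ a ∈ range p, R (i + a) x) p := fun i =>
    periodic_of_sum_range_add_eq (C := C) fun x => by rw [sum_comm]; exact h i x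
  intro x
  simp only [sum_range_mul _ p k, Nat.cast_add, ← add_assoc]
  exact sum_congr rfl fun t _ => hwindow _ x

theorem sum_range_diag_eq_nsmul [AddCommMonoid M] {R : G → G → M} {p m : ℕ} {K : M}
    (hK : ∀ i j, ∑ t ∈ range p, R (i + ↑(t * m)) (j + ↑(t * m)) = K) (i j : G) :
    ∑ v ∈ range (p * m), R (i + v) (j + v) = m • K := by
  have hclass : ∀ u, ∑ t ∈ range p, R (i + ↑(t * m + u)) (j + ↑(t * m + u)) = K := by
    intro u
    rw [← hK (i + u) (j + u)]
    refine sum_congr rfl fun t _ => ?_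
    push_cast
    ring_nf
  rw [sum_range_mul, sum_comm, sum_congr rfl fun u _ => hclass u, sum_const, card_range]

theorem sum_sum_blocks_eq_nsmul [AddCommMonoid M] {R : G → G → M} {p q m : ℕ} {K : M}
    (hK : ∀ i j, ∑ t ∈ range p, R (i + ↑(t * m)) (j + ↑(t * m)) = K)
    (hper : ∀ i, Periodic (fun x => ∑ u ∈ range q, R (i + u) x) (m : G)) (x y : G) :
    ∑ j ∈ range p, ∑ u ∈ range q, R (x + ↑(j * m) + u) y = q • K := by
  calc ∑ j ∈ range p, ∑ u ∈ range q, R (x + ↑(j * m) + u) y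
      = ∑ j ∈ range p, ∑ u ∈ range q, R (x + ↑(j * m) + u) (y + ↑(j * m)) := by
        refine sum_congr rfl fun j _ => ?_
        rw [Nat.cast_mul]
        exact ((hper _).nat_mul j y).symm
    _ = ∑ u ∈ range q, ∑ j ∈ range p, R (x + u + ↑(j * m)) (y + ↑(j * m)) := by
        rw [sum_comm]
        simp only [add_right_comm x]
    _ = q • K := by
        rw [sum_congr rfl fun u _ => hK _ _, sum_const, card_range]

end WindowSums

theorem barIdx_mul_add {p a j : ℕ} (hj : j < p) : barIdx p (a * p + j) = j * p + a := by
  have hp : 0 < p := by omega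
  rw [barIdx, Nat.mul_add_mod_of_lt hj, mul_comm a, Nat.mul_add_div hp, Nat.div_eq_of_lt hj,
    add_zero]

theorem thetaZ_segment_apply {p q n : ℕ} [NeZero n] (hn : n = p ^ 2 * q)
    (R : ZMod n → ZMod n → ℤ) (c : ZMod n) {s j u : ℕ} (hj : j < p) (hu : u < q) :
    thetaZ p n R ((s * (p * q) + (j * q + u) : ℕ) : ZMod n) c =
      R ((s % p * q : ℕ) + ((j * (p * q) : ℕ) : ZMod n) + u)
        ((barIdx p (c.val / q) * q + c.val % q : ℕ) : ZMod n) := by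
  have hp : 0 < p := by omega
  have hq : 0 < q := by omega
  have hnq : n / p ^ 2 = q := by rw [hn, Nat.mul_div_cancel_left _ (by positivity)]
  have hblock : s % p * p + j < p * p := by nlinarith [Nat.mod_lt s hp]
  have hval : ((s * (p * q) + (j * q + u) : ℕ) : ZMod n).val = q * (s % p * p + j) + u := by
    have hs : s * (p * q) + (j * q + u) = q * (s % p * p + j) + u + s / p * n := by
      conv_lhs => rw [← Nat.mod_add_div s p]
      rw [hn]; ring
    rw [ZMod.val_natCast, hs, Nat.add_mul_mod_self_right, Nat.mod_eq_of_lt]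
    rw [hn]; nlinarith
  simp only [thetaZ, hnq, hval, Nat.mul_add_div hq, Nat.div_eq_of_lt hu, add_zero,
    Nat.mul_add_mod, Nat.mod_eq_of_lt hu, barIdx_mul_add hj]
  push_cast
  ring_nf

theorem sum_range_thetaZ_segment {p q n : ℕ} [NeZero n] (hn : n = p ^ 2 * q)
    (R : ZMod n → ZMod n → ℤ) (s : ℕ) (c : ZMod n) :
    ∑ t ∈ range (p * q), thetaZ p n R ((s * (p * q) + t : ℕ) : ZMod n) c =
      ∑ j ∈ range p, ∑ u ∈ range q, R ((s % p * q : ℕ) + ((j * (p * q) : ℕ) : ZMod n) + u)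
        ((barIdx p (c.val / q) * q + c.val % q : ℕ) : ZMod n) := by
  rw [sum_range_mul]
  exact sum_congr rfl fun j hj => sum_congr rfl fun u hu =>
    thetaZ_segment_apply hn R c (mem_range.1 hj) (mem_range.1 hu)

theorem ediv_two_mul_eq_of_mul_eq {n p q K : ℤ} (hp : p ≠ 0)
    (h : p * q * K = n * (n ^ 2 - 1) / 2) :
    n * (n ^ 2 - 1) / (2 * p) = q * K := by
  have heven : 2 ∣ n * (n ^ 2 - 1) := by
    obtain ⟨r, hr⟩ := Int.even_mul_succ_self n
    exact ⟨(n - 1) * r, by linear_combination (n - 1) * hr⟩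
  rw [← Int.mul_ediv_cancel' heven, ← h, show 2 * (p * q * K) = 2 * p * (q * K) by ring,
    Int.mul_ediv_cancel_left _ (by positivity)]

theorem stmt_19_general (p n : ℕ) [NeZero n] (hpn : p ^ 3 ∣ n)
    (R : ZMod n → ZMod n → ℤ)
    (hpan : ∀ i j : ZMod n,
      ∑ t : Fin n, R (i + (t : ℕ)) (j + (t : ℕ)) = (n : ℤ) * ((n : ℤ) ^ 2 - 1) / 2)
    (hcomp : ∀ i j : ZMod n,
      ∑ t : Fin p, R (i + ((t : ℕ) * (n / p) : ℕ)) (j + ((t : ℕ) * (n / p) : ℕ))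
        = (p : ℤ) * ((n : ℤ) ^ 2 - 1) / 2)
    (hppsq : ∀ i j : ZMod n,
      ∑ a : Fin p, ∑ b : Fin p, R (i + (a : ℕ)) (j + (b : ℕ))
        = (p : ℤ) ^ 2 * ((n : ℤ) ^ 2 - 1) / 2) :
    ∀ c : ZMod n, ∀ s : ℕ,
      ∑ t : Fin (n / p), thetaZ p n R ((s * (n / p) + (t : ℕ) : ℕ) : ZMod n) c
        = (n : ℤ) * ((n : ℤ) ^ 2 - 1) / (2 * (p : ℤ)) := by
  obtain ⟨k, hk⟩ := hpn
  have hp : p ≠ 0 := by rintro rfl; simp [NeZero.ne n] at hk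
  set q := k * p
  have hnq : n = p ^ 2 * q := by rw [hk]; ring
  have hnp : n = p * (p * q) := by rw [hnq]; ring
  have hnpq : n / p = p * q := by rw [hnp, Nat.mul_div_cancel_left _ (Nat.pos_of_ne_zero hp)]
  have hcomp' : ∀ i j : ZMod n, ∑ t ∈ range p, R (i + ↑(t * (p * q))) (j + ↑(t * (p * q))) =
      (p : ℤ) * ((n : ℤ) ^ 2 - 1) / 2 := fun i j => by
    simpa only [sum_range, hnpq] using hcomp i j
  have hsquare : ∀ i j : ZMod n, ∑ a ∈ range p, ∑ b ∈ range p, R (i + a) (j + b) =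
      (p : ℤ) ^ 2 * ((n : ℤ) ^ 2 - 1) / 2 := fun i j => by
    simpa only [sum_range] using hppsq i j
  have hper : ∀ i : ZMod n,
      Periodic (fun x => ∑ u ∈ range q, R (i + u) x) ((p * q : ℕ) : ZMod n) := fun i => by
    rw [Nat.cast_mul, mul_comm (p : ZMod n)]
    exact (periodic_sum_rows_of_sum_square_eq hsquare k i).nat_mul q
  have hdiag : (p : ℤ) * q * ((p : ℤ) * ((n : ℤ) ^ 2 - 1) / 2) =
      (n : ℤ) * ((n : ℤ) ^ 2 - 1) / 2 := by
    have hsplit := sum_range_diag_eq_nsmul hcomp' 0 0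
    rw [← hnp, sum_range, hpan 0 0, nsmul_eq_mul] at hsplit
    rw [hsplit]
    push_cast
    ring
  intro c s
  rw [← sum_range (fun t => thetaZ p n R ((s * (n / p) + t : ℕ) : ZMod n) c), hnpq,
    sum_range_thetaZ_segment hnq, sum_sum_blocks_eq_nsmul hcomp' hper,
    ediv_two_mul_eq_of_mul_eq (by exact_mod_cast hp) hdiag, nsmul_eq_mul]

/-- For p prime with p³ ∣ n, if R is a natural pandiagonal n×n square with the
complementary property and the toric p×p property (subsquare sum p²(n²−1)/2),
then θ(R) has the 1/p column property: each of the p natural segments of n/p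
consecutive entries of any column sums to n(n²−1)/(2p). -/
theorem stmt_19 (p n : ℕ) [NeZero n] (hp : p.Prime) (hn : 0 < n) (hpn : p ^ 3 ∣ n)
    (R : ZMod n → ZMod n → ℤ)
    (hnat : ∀ i j : ZMod n, R i j ∈ Finset.Icc (0 : ℤ) ((n : ℤ) ^ 2 - 1))
    (hinj : Function.Injective (fun x : ZMod n × ZMod n => R x.1 x.2))
    (hpan : ∀ i j : ZMod n,
      ∑ t : Fin n, R (i + (t : ℕ)) (j + (t : ℕ)) = (n : ℤ) * ((n : ℤ) ^ 2 - 1) / 2)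
    (hcomp : ∀ i j : ZMod n,
      ∑ t : Fin p, R (i + ((t : ℕ) * (n / p) : ℕ)) (j + ((t : ℕ) * (n / p) : ℕ))
        = (p : ℤ) * ((n : ℤ) ^ 2 - 1) / 2)
    (hppsq : ∀ i j : ZMod n,
      ∑ a : Fin p, ∑ b : Fin p, R (i + (a : ℕ)) (j + (b : ℕ))
        = (p : ℤ) ^ 2 * ((n : ℤ) ^ 2 - 1) / 2) :
    ∀ c : ZMod n, ∀ s : ℕ,
      ∑ t : Fin (n / p), thetaZ p n R ((s * (n / p) + (t : ℕ) : ℕ) : ZMod n) c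
        = (n : ℤ) * ((n : ℤ) ^ 2 - 1) / (2 * (p : ℤ)) :=
  stmt_19_general p n hpn R hpan hcomp hppsq
end
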